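/- If Q(f) = 0 (the obstruction vanishes), the formal harmonic extension continues: suppose f̃ is homogeneous of degree (0,0) with Δf̃ = L^{n−1}h, h homogeneous of degree (−n,−n), and suppose h vanishes on {L=0} (i.e. h = O(L)). Then for every k > n there exists f̃_k with f̃_k − f̃ = O(L^n) and Δf̃_k = O(L^{k−1}); i.e. the induction g = −h/(k(n−k)) can be continued past k = n to all orders. -/

import Mathlib

open Complex

/-- The Wirtinger derivative `∂/∂ζ_j` of a function on `ℂ^m`. -/
noncomputable def wirtingerD {m : ℕ} (j : Fin m) (f : (Fin m → ℂ) → ℂ)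
    (z : Fin m → ℂ) : ℂ :=
  (1 / 2) * (fderiv ℝ f z (Pi.single j 1) - Complex.I * fderiv ℝ f z (Pi.single j Complex.I))

/-- The Wirtinger derivative `∂/∂ζ̄_j` of a function on `ℂ^m`. -/
noncomputable def wirtingerDBar {m : ℕ} (j : Fin m) (f : (Fin m → ℂ) → ℂ)
    (z : Fin m → ℂ) : ℂ :=
  (1 / 2) * (fderiv ℝ f z (Pi.single j 1) + Complex.I * fderiv ℝ f z (Pi.single j Complex.I))

/-- Signs of the Lorentz-hermitian form: `+1` for `j = 0`, `-1` otherwise. -/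
def lorentzSign {n : ℕ} (j : Fin (n + 1)) : ℂ := if j = 0 then 1 else -1

/-- The Lorentz-hermitian Laplacian
`Δ = ∂_{ζ0}∂_{ζ̄0} − Σ_{j=1}^n ∂_{ζj}∂_{ζ̄j}` on `ℂ^{n+1}`. -/
noncomputable def ambientLap (n : ℕ) (f : (Fin (n + 1) → ℂ) → ℂ) :
    (Fin (n + 1) → ℂ) → ℂ :=
  fun z => ∑ j : Fin (n + 1), lorentzSign j * wirtingerD j (wirtingerDBar j f) z

/-- The hermitian form `L(ζ) = |ζ0|² − |ζ1|² − ⋯ − |ζn|²`. -/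
noncomputable def lorentzForm (n : ℕ) (z : Fin (n + 1) → ℂ) : ℂ :=
  ∑ j : Fin (n + 1), lorentzSign j * (Complex.normSq (z j) : ℂ)

/-- The holomorphic Euler operator `Z = Σ_j ζ_j ∂_{ζj}`. -/
noncomputable def eulerZ {n : ℕ} (f : (Fin (n + 1) → ℂ) → ℂ) (z : Fin (n + 1) → ℂ) : ℂ :=
  ∑ j : Fin (n + 1), z j * wirtingerD j f z

/-- The conjugate Euler operator `Z̄ = Σ_j ζ̄_j ∂_{ζ̄j}`. -/
noncomputable def eulerZBar {n : ℕ} (f : (Fin (n + 1) → ℂ) → ℂ) (z : Fin (n + 1) → ℂ) : ℂ :=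
  ∑ j : Fin (n + 1), (starRingEnd ℂ) (z j) * wirtingerDBar j f z

/-- `f` is homogeneous of bidegree `(p,q) ∈ ℤ²`:  `f(λζ) = λ^p λ̄^q f(ζ)` for `λ ∈ ℂ*`. -/
def BiHomogeneous {n : ℕ} (f : (Fin (n + 1) → ℂ) → ℂ) (p q : ℤ) : Prop :=
  ∀ (lam : ℂ), lam ≠ 0 → ∀ z : Fin (n + 1) → ℂ,
    f (lam • z) = lam ^ p * ((starRingEnd ℂ) lam) ^ q * f z


set_option linter.unusedTactic false
set_option linter.unreachableTactic false
set_option linter.unnecessarySeqFocus false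

section A
variable {m : ℕ} {s : Set (Fin m → ℂ)} {f g : (Fin m → ℂ) → ℂ} {j : Fin m} {z : Fin m → ℂ}

lemma contDiffOn_fderiv_apply (hs : IsOpen s) (hf : ContDiffOn ℝ (⊤ : ℕ∞) f s) (v : Fin m → ℂ) :
    ContDiffOn ℝ (⊤ : ℕ∞) (fun z => fderiv ℝ f z v) s := by
  have h1 : ContDiffOn ℝ (⊤ : ℕ∞) (fderiv ℝ f) s := hf.fderiv_of_isOpen hs (by exact (by simp))
  exact h1.clm_apply contDiffOn_const

lemma ContDiffOn.wirtingerD (hs : IsOpen s) (hf : ContDiffOn ℝ (⊤ : ℕ∞) f s) :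
    ContDiffOn ℝ (⊤ : ℕ∞) (wirtingerD j f) s := by
  unfold _root_.wirtingerD
  exact ContDiffOn.mul contDiffOn_const
    ((contDiffOn_fderiv_apply hs hf _).sub (contDiffOn_const.mul (contDiffOn_fderiv_apply hs hf _)))

lemma ContDiffOn.wirtingerDBar (hs : IsOpen s) (hf : ContDiffOn ℝ (⊤ : ℕ∞) f s) :
    ContDiffOn ℝ (⊤ : ℕ∞) (wirtingerDBar j f) s := by
  unfold _root_.wirtingerDBar
  exact ContDiffOn.mul contDiffOn_const
    ((contDiffOn_fderiv_apply hs hf _).add (contDiffOn_const.mul (contDiffOn_fderiv_apply hs hf _)))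

lemma wirtingerD_congr (h : f =ᶠ[nhds z] g) : wirtingerD j f z = wirtingerD j g z := by
  unfold wirtingerD; rw [h.fderiv_eq]

lemma wirtingerDBar_congr (h : f =ᶠ[nhds z] g) : wirtingerDBar j f z = wirtingerDBar j g z := by
  unfold wirtingerDBar; rw [h.fderiv_eq]

lemma wirtingerD_add (hf : DifferentiableAt ℝ f z) (hg : DifferentiableAt ℝ g z) :
    wirtingerD j (fun y => f y + g y) z = wirtingerD j f z + wirtingerD j g z := by
  unfold wirtingerD; rw [fderiv_fun_add hf hg]; simp; ring

lemma wirtingerDBar_add (hf : DifferentiableAt ℝ f z) (hg : DifferentiableAt ℝ g z) :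
    wirtingerDBar j (fun y => f y + g y) z = wirtingerDBar j f z + wirtingerDBar j g z := by
  unfold wirtingerDBar; rw [fderiv_fun_add hf hg]; simp; ring

lemma wirtingerD_mul (hf : DifferentiableAt ℝ f z) (hg : DifferentiableAt ℝ g z) :
    wirtingerD j (fun y => f y * g y) z = f z * wirtingerD j g z + g z * wirtingerD j f z := by
  unfold wirtingerD; rw [fderiv_fun_mul hf hg]; simp [smul_eq_mul]; ring

lemma wirtingerDBar_mul (hf : DifferentiableAt ℝ f z) (hg : DifferentiableAt ℝ g z) :
    wirtingerDBar j (fun y => f y * g y) z = f z * wirtingerDBar j g z + g z * wirtingerDBar j f z := by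
  unfold wirtingerDBar; rw [fderiv_fun_mul hf hg]; simp [smul_eq_mul]; ring

lemma wirtingerD_const_mul (c : ℂ) (hf : DifferentiableAt ℝ f z) :
    wirtingerD j (fun y => c * f y) z = c * wirtingerD j f z := by
  unfold wirtingerD
  rw [show (fun y => c * f y) = fun y => c • f y from rfl, fderiv_fun_const_smul hf c]
  simp [smul_eq_mul]; ring

lemma wirtingerDBar_const_mul (c : ℂ) (hf : DifferentiableAt ℝ f z) :
    wirtingerDBar j (fun y => c * f y) z = c * wirtingerDBar j f z := by
  unfold wirtingerDBar
  rw [show (fun y => c * f y) = fun y => c • f y from rfl, fderiv_fun_const_smul hf c]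
  simp [smul_eq_mul]; ring

end A

section C
variable {m : ℕ} {j k : Fin m} {z : Fin m → ℂ}

lemma fderiv_coord (k : Fin m) (z v : Fin m → ℂ) :
    fderiv ℝ (fun y : Fin m → ℂ => y k) z v = v k := by
  rw [show (fun y : Fin m → ℂ => y k) = (ContinuousLinearMap.proj (R := ℝ) k : (Fin m → ℂ) →L[ℝ] ℂ) from rfl,
    ContinuousLinearMap.fderiv]
  rfl

lemma fderiv_coord_conj (k : Fin m) (z v : Fin m → ℂ) :
    fderiv ℝ (fun y : Fin m → ℂ => (starRingEnd ℂ) (y k)) z v = (starRingEnd ℂ) (v k) := by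
  have : (fun y : Fin m → ℂ => (starRingEnd ℂ) (y k)) =
      ((Complex.conjCLE.toContinuousLinearMap).comp (ContinuousLinearMap.proj (R := ℝ) k)) := rfl
  rw [this, ContinuousLinearMap.fderiv]
  rfl

lemma differentiableAt_coord : DifferentiableAt ℝ (fun y : Fin m → ℂ => y k) z :=
  (ContinuousLinearMap.proj (R := ℝ) k : (Fin m → ℂ) →L[ℝ] ℂ).differentiableAt

lemma differentiableAt_coord_conj :
    DifferentiableAt ℝ (fun y : Fin m → ℂ => (starRingEnd ℂ) (y k)) z := by
  have := ((Complex.conjCLE.toContinuousLinearMap).comp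
    (ContinuousLinearMap.proj (R := ℝ) (φ := fun _ : Fin m => ℂ) k)).differentiableAt (x := z)
  exact this

lemma wirtingerD_coord : wirtingerD j (fun y => y k) z = if k = j then 1 else 0 := by
  unfold wirtingerD
  rw [fderiv_coord, fderiv_coord]
  by_cases h : k = j <;> simp [h, Pi.single_apply] <;> ring

lemma wirtingerDBar_coord : wirtingerDBar j (fun y => y k) z = 0 := by
  unfold wirtingerDBar
  rw [fderiv_coord, fderiv_coord]
  by_cases h : k = j <;> simp [h, Pi.single_apply] <;> ring_nf <;> simp [Complex.I_mul_I] <;> ring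

lemma wirtingerD_coord_conj : wirtingerD j (fun y => (starRingEnd ℂ) (y k)) z = 0 := by
  unfold wirtingerD
  rw [fderiv_coord_conj, fderiv_coord_conj]
  by_cases h : k = j <;> simp [h, Pi.single_apply] <;> ring_nf <;> simp [Complex.I_mul_I]

lemma wirtingerDBar_coord_conj :
    wirtingerDBar j (fun y => (starRingEnd ℂ) (y k)) z = if k = j then 1 else 0 := by
  unfold wirtingerDBar
  rw [fderiv_coord_conj, fderiv_coord_conj]
  by_cases h : k = j <;> simp [h, Pi.single_apply]
  ring

end C

section D
variable {m : ℕ} {j : Fin m} {z : Fin m → ℂ}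

lemma wirtingerD_sum {ι : Type*} (t : Finset ι) (F : ι → (Fin m → ℂ) → ℂ)
    (h : ∀ i ∈ t, DifferentiableAt ℝ (F i) z) :
    wirtingerD j (fun y => ∑ i ∈ t, F i y) z = ∑ i ∈ t, wirtingerD j (F i) z := by
  unfold wirtingerD
  rw [fderiv_fun_sum h]
  simp only [ContinuousLinearMap.coe_sum', Finset.sum_apply]
  rw [Finset.mul_sum, ← Finset.sum_sub_distrib, Finset.mul_sum]

lemma wirtingerDBar_sum {ι : Type*} (t : Finset ι) (F : ι → (Fin m → ℂ) → ℂ)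
    (h : ∀ i ∈ t, DifferentiableAt ℝ (F i) z) :
    wirtingerDBar j (fun y => ∑ i ∈ t, F i y) z = ∑ i ∈ t, wirtingerDBar j (F i) z := by
  unfold wirtingerDBar
  rw [fderiv_fun_sum h]
  simp only [ContinuousLinearMap.coe_sum', Finset.sum_apply]
  rw [Finset.mul_sum, ← Finset.sum_add_distrib, Finset.mul_sum]

end D

section E
variable {n : ℕ} {j : Fin (n + 1)} {z : Fin (n + 1) → ℂ}

lemma lorentzForm_eq (n : ℕ) : lorentzForm n =
    fun z => ∑ i : Fin (n + 1), lorentzSign i * (z i * (starRingEnd ℂ) (z i)) := by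
  funext z; unfold lorentzForm; congr 1; funext i; rw [Complex.mul_conj]

lemma contDiff_lorentzForm : ContDiff ℝ (⊤ : ℕ∞) (lorentzForm n) := by
  rw [lorentzForm_eq]
  apply ContDiff.sum
  intro i _
  apply ContDiff.mul contDiff_const
  apply ContDiff.mul
  · exact (ContinuousLinearMap.proj (R := ℝ) (φ := fun _ : Fin (n+1) => ℂ) i).contDiff
  · exact ((Complex.conjCLE.toContinuousLinearMap).comp
      (ContinuousLinearMap.proj (R := ℝ) (φ := fun _ : Fin (n+1) => ℂ) i)).contDiff

lemma differentiableAt_lorentzForm : DifferentiableAt ℝ (lorentzForm n) z :=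
  contDiff_lorentzForm.differentiable (by simp) z

lemma differentiableAt_lorentzPow (M : ℕ) :
    DifferentiableAt ℝ (fun y => lorentzForm n y ^ M) z :=
  (contDiff_lorentzForm.pow M).differentiable (by simp) z

section F
variable {n : ℕ} {j : Fin (n + 1)} {z : Fin (n + 1) → ℂ}

lemma lorentzSign_mul_self (j : Fin (n+1)) : lorentzSign j * lorentzSign j = 1 := by
  unfold lorentzSign; split_ifs <;> norm_num

lemma wirtingerD_lorentz : wirtingerD j (lorentzForm n) z = lorentzSign j * (starRingEnd ℂ) (z j) := by
  rw [lorentzForm_eq]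
  rw [wirtingerD_sum Finset.univ _ (fun i _ => by
    exact (differentiableAt_const _).mul (differentiableAt_coord.mul differentiableAt_coord_conj))]
  have hterm : ∀ i : Fin (n+1), wirtingerD j (fun y => lorentzSign i * (y i * (starRingEnd ℂ) (y i))) z
      = (if i = j then 1 else 0) * (lorentzSign i * (starRingEnd ℂ) (z i)) := by
    intro i
    rw [wirtingerD_const_mul _ (differentiableAt_coord.fun_mul differentiableAt_coord_conj),
      wirtingerD_mul differentiableAt_coord differentiableAt_coord_conj,
      wirtingerD_coord, wirtingerD_coord_conj]
    ring
  simp only [hterm]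
  simp

lemma wirtingerDBar_lorentz : wirtingerDBar j (lorentzForm n) z = lorentzSign j * z j := by
  rw [lorentzForm_eq]
  rw [wirtingerDBar_sum Finset.univ _ (fun i _ => by
    exact (differentiableAt_const _).mul (differentiableAt_coord.mul differentiableAt_coord_conj))]
  have hterm : ∀ i : Fin (n+1), wirtingerDBar j (fun y => lorentzSign i * (y i * (starRingEnd ℂ) (y i))) z
      = (if i = j then 1 else 0) * (lorentzSign i * z i) := by
    intro i
    rw [wirtingerDBar_const_mul _ (differentiableAt_coord.fun_mul differentiableAt_coord_conj),
      wirtingerDBar_mul differentiableAt_coord differentiableAt_coord_conj,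
      wirtingerDBar_coord, wirtingerDBar_coord_conj]
    ring
  simp only [hterm]
  simp

lemma wirtingerD_lorentzPow (M : ℕ) :
    wirtingerD j (fun y => lorentzForm n y ^ (M+1)) z
      = (M+1 : ℂ) * lorentzForm n z ^ M * (lorentzSign j * (starRingEnd ℂ) (z j)) := by
  induction M with
  | zero =>
      have : (fun y : Fin (n+1) → ℂ => lorentzForm n y ^ 1) = lorentzForm n := by
        funext y; rw [pow_one]
      rw [this, wirtingerD_lorentz]; ring
  | succ M ih =>
      have : (fun y : Fin (n+1) → ℂ => lorentzForm n y ^ (M+2))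
          = fun y => (lorentzForm n y ^ (M+1)) * lorentzForm n y := by
        funext y; rw [← pow_succ]
      rw [this, wirtingerD_mul (differentiableAt_lorentzPow (M+1)) differentiableAt_lorentzForm,
        ih, wirtingerD_lorentz, pow_succ]
      push_cast; ring

lemma wirtingerDBar_lorentzPow (M : ℕ) :
    wirtingerDBar j (fun y => lorentzForm n y ^ (M+1)) z
      = (M+1 : ℂ) * lorentzForm n z ^ M * (lorentzSign j * z j) := by
  induction M with
  | zero =>
      have : (fun y : Fin (n+1) → ℂ => lorentzForm n y ^ 1) = lorentzForm n := by
        funext y; rw [pow_one]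
      rw [this, wirtingerDBar_lorentz]; ring
  | succ M ih =>
      have : (fun y : Fin (n+1) → ℂ => lorentzForm n y ^ (M+2))
          = fun y => (lorentzForm n y ^ (M+1)) * lorentzForm n y := by
        funext y; rw [← pow_succ]
      rw [this, wirtingerDBar_mul (differentiableAt_lorentzPow (M+1)) differentiableAt_lorentzForm,
        ih, wirtingerDBar_lorentz, pow_succ]
      push_cast; ring

lemma lorentzForm_smul (lam : ℂ) (z : Fin (n+1) → ℂ) :
    lorentzForm n (lam • z) = lam * (starRingEnd ℂ) lam * lorentzForm n z := by
  simp only [lorentzForm_eq]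
  rw [Finset.mul_sum]
  congr 1; funext i
  simp only [Pi.smul_apply, smul_eq_mul, map_mul]
  ring

end F

/-- Homogeneity away from the origin. -/
def BiHomogOn {n : ℕ} (f : (Fin (n + 1) → ℂ) → ℂ) (p q : ℤ) : Prop :=
  ∀ (lam : ℂ), lam ≠ 0 → ∀ z : Fin (n + 1) → ℂ, z ≠ 0 →
    f (lam • z) = lam ^ p * ((starRingEnd ℂ) lam) ^ q * f z

section G
variable {m : ℕ} {f : (Fin m → ℂ) → ℂ} {j : Fin m} {z : Fin m → ℂ}

lemma single_decomp (j : Fin m) (w : ℂ) :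
    Pi.single j w = w.re • (Pi.single j 1 : Fin m → ℂ)
      + w.im • (Pi.single j Complex.I : Fin m → ℂ) := by
  funext i
  by_cases h : i = j <;>
    simp [h, Pi.single_apply, Complex.real_smul, Complex.re_add_im]

lemma clm_single (D : (Fin m → ℂ) →L[ℝ] ℂ) (j : Fin m) (w : ℂ) :
    D (Pi.single j w) = (w.re : ℂ) * D (Pi.single j 1) + (w.im : ℂ) * D (Pi.single j Complex.I) := by
  rw [single_decomp j w, map_add, map_smul, map_smul]
  simp [Complex.real_smul]

lemma euler_sum (hf : DifferentiableAt ℝ f z) :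
    ∑ j : Fin m, (z j * wirtingerD j f z + (starRingEnd ℂ) (z j) * wirtingerDBar j f z)
      = fderiv ℝ f z z := by
  set D := fderiv ℝ f z with hD
  have hterm : ∀ j : Fin m,
      z j * wirtingerD j f z + (starRingEnd ℂ) (z j) * wirtingerDBar j f z
        = D (Pi.single j (z j)) := by
    intro j
    rw [clm_single D j (z j)]
    have ha : ((z j).re : ℂ) = (z j + (starRingEnd ℂ) (z j)) / 2 := by
      rw [Complex.add_conj]; push_cast; ring
    have hb : ((z j).im : ℂ) = (z j - (starRingEnd ℂ) (z j)) / (2 * Complex.I) := by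
      rw [Complex.sub_conj]
      field_simp
      push_cast; ring
    rw [ha, hb]
    unfold wirtingerD wirtingerDBar
    field_simp
    ring_nf
    simp only [Complex.I_sq]
    ring
  rw [Finset.sum_congr rfl (fun j _ => hterm j)]
  rw [← map_sum]
  rw [Finset.univ_sum_single]

lemma euler_radial {n : ℕ} {f : (Fin (n + 1) → ℂ) → ℂ} {p q : ℤ} {z : Fin (n+1) → ℂ}
    (hf : DifferentiableAt ℝ f z) (hhom : BiHomogOn f p q) (hz : z ≠ 0) :
    fderiv ℝ f z z = ((p + q : ℤ) : ℂ) * f z := by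
  have hγ : HasDerivAt (fun t : ℝ => z + t • z) z 0 := by
    have h1 : HasDerivAt (fun t : ℝ => t • z) ((1:ℝ) • z) 0 := (hasDerivAt_id 0).smul_const z
    simpa using h1.const_add z
  have hc : HasDerivAt (fun t : ℝ => f (z + t • z)) (fderiv ℝ f z z) 0 := by
    have h0 : z = z + (0:ℝ) • z := by simp
    have hF : HasFDerivAt f (fderiv ℝ f z) ((fun t : ℝ => z + t • z) 0) := by
      rw [show (fun t : ℝ => z + t • z) 0 = z by simp]
      exact hf.hasFDerivAt
    have := hF.comp_hasDerivAt 0 hγ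
    simpa [Function.comp_def] using this
  have heq : (fun t : ℝ => f (z + t • z)) =ᶠ[nhds 0]
      fun t : ℝ => (1 + (t:ℂ)) ^ (p + q) * f z := by
    have hmem : {t : ℝ | |t| < 1} ∈ nhds (0:ℝ) := by
      have : Metric.ball (0:ℝ) 1 ∈ nhds (0:ℝ) := Metric.ball_mem_nhds 0 one_pos
      simpa [Real.ball_eq_Ioo, Metric.ball, Real.dist_eq, abs_sub_comm] using this
    filter_upwards [hmem] with t ht
    have hlam : (1 + (t:ℂ)) ≠ 0 := by
      intro hcon
      have : (t:ℂ) = -1 := by linear_combination hcon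
      have : t = -1 := by exact_mod_cast this
      rw [this] at ht; norm_num at ht
    have hzz : z + t • z = (1 + (t:ℂ)) • z := by
      rw [add_smul, one_smul, Complex.coe_smul]
    rw [hzz, hhom _ hlam z hz]
    have hconj : (starRingEnd ℂ) (1 + (t:ℂ)) = 1 + (t:ℂ) := by
      simp [Complex.conj_ofReal]
    rw [hconj, ← zpow_add₀ hlam]
  have hrhs : HasDerivAt (fun t : ℝ => (1 + (t:ℂ)) ^ (p + q) * f z)
      (((p + q : ℤ) : ℂ) * f z) 0 := by
    have h1 : HasDerivAt (fun w : ℂ => (1 + w) ^ (p + q)) (((p+q:ℤ):ℂ)) 0 := by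
      have hz1 : HasDerivAt (fun w : ℂ => w ^ (p+q)) (((p+q:ℤ):ℂ) * 1 ^ ((p+q) - 1)) 1 :=
        hasDerivAt_zpow (p+q) 1 (Or.inl one_ne_zero)
      have hin : HasDerivAt (fun w : ℂ => 1 + w) 1 0 := by
        simpa using (hasDerivAt_id (0:ℂ)).const_add 1
      have := HasDerivAt.comp (0:ℂ) (by simpa using hz1) hin
      simpa [Function.comp_def] using this
    have h2 := (h1.mul_const (f z)).comp_ofReal (z := (0:ℝ))
    simpa using h2
  exact hc.unique (hrhs.congr_of_eventuallyEq heq)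

end G

section H
variable {n : ℕ} {f : (Fin (n + 1) → ℂ) → ℂ} {p q : ℤ} {j : Fin (n+1)} {z : Fin (n+1) → ℂ}

lemma isOpenS : IsOpen {z : Fin (n + 1) → ℂ | z ≠ 0} := isOpen_compl_singleton

lemma diffAt_of_contDiffOnS (hf : ContDiffOn ℝ (⊤ : ℕ∞) f {z : Fin (n + 1) → ℂ | z ≠ 0})
    (hz : z ≠ 0) : DifferentiableAt ℝ f z :=
  (hf.differentiableOn (by simp)).differentiableAt (isOpenS.mem_nhds hz)

lemma smul_single (u x : ℂ) (j : Fin (n+1)) :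
    u • (Pi.single j x : Fin (n+1) → ℂ) = Pi.single j (u * x) := by
  funext i
  by_cases h : i = j <;> simp [h, Pi.single_apply]

lemma fderiv_homog (hfd : ∀ y : Fin (n+1) → ℂ, y ≠ 0 → DifferentiableAt ℝ f y)
    (hhom : BiHomogOn f p q) {lam : ℂ} (hlam : lam ≠ 0) (hz : z ≠ 0) (w : Fin (n+1) → ℂ) :
    fderiv ℝ f (lam • z) w
      = lam ^ p * ((starRingEnd ℂ) lam) ^ q * fderiv ℝ f z (lam⁻¹ • w) := by
  set A : (Fin (n+1) → ℂ) →L[ℝ] (Fin (n+1) → ℂ) :=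
    (lam • ContinuousLinearMap.id ℂ (Fin (n+1) → ℂ)).restrictScalars ℝ with hA
  have hAv : ∀ v, A v = lam • v := fun v => rfl
  have hglam : DifferentiableAt ℝ f (lam • z) := hfd _ (smul_ne_zero hlam hz)
  have h1 : fderiv ℝ (fun y => f (lam • y)) z = (fderiv ℝ f (lam • z)).comp A := by
    have hcomp : (fun y => f (lam • y)) = f ∘ A := by funext y; simp [hAv]
    rw [hcomp, fderiv_comp z (by rw [hAv]; exact hglam) A.differentiableAt,
      A.fderiv, hAv]
  have h2 : (fun y => f (lam • y)) =ᶠ[nhds z]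
      fun y => lam ^ p * ((starRingEnd ℂ) lam) ^ q * f y := by
    filter_upwards [isOpenS.mem_nhds hz] with y hy
    exact hhom lam hlam y hy
  have h3 : fderiv ℝ (fun y => f (lam • y)) z
      = (lam ^ p * ((starRingEnd ℂ) lam) ^ q) • fderiv ℝ f z := by
    rw [h2.fderiv_eq, fderiv_const_mul (hfd z hz)]
  have h4 := congrArg (fun (D : (Fin (n+1) → ℂ) →L[ℝ] ℂ) => D (lam⁻¹ • w)) h1
  rw [h3] at h4
  simp only [ContinuousLinearMap.comp_apply, ContinuousLinearMap.smul_apply, smul_eq_mul] at h4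
  rw [hAv, smul_smul, mul_inv_cancel₀ hlam, one_smul] at h4
  exact h4.symm

lemma conj_eq_re_sub_im (u : ℂ) : (starRingEnd ℂ) u = (u.re : ℂ) - u.im * Complex.I := by
  apply Complex.ext <;> simp

lemma wirtingerD_homog (hfd : ∀ y : Fin (n+1) → ℂ, y ≠ 0 → DifferentiableAt ℝ f y)
    (hhom : BiHomogOn f p q) : BiHomogOn (wirtingerD j f) (p - 1) q := by
  intro lam hlam z hz
  set u := lam⁻¹ with hu
  set X := fderiv ℝ f z (Pi.single j 1) with hX
  set Y := fderiv ℝ f z (Pi.single j Complex.I) with hY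
  set c := lam ^ p * ((starRingEnd ℂ) lam) ^ q with hc
  have e1 : fderiv ℝ f (lam • z) (Pi.single j 1)
      = c * ((u.re : ℂ) * X + (u.im : ℂ) * Y) := by
    rw [fderiv_homog hfd hhom hlam hz, smul_single, mul_one,
      clm_single (fderiv ℝ f z) j u]
  have e2 : fderiv ℝ f (lam • z) (Pi.single j Complex.I)
      = c * ((-u.im : ℝ) * X + (u.re : ℂ) * Y) := by
    rw [fderiv_homog hfd hhom hlam hz, smul_single,
      clm_single (fderiv ℝ f z) j (u * Complex.I)]
    rw [Complex.mul_I_re, Complex.mul_I_im]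
    (try push_cast); (try ring)
  unfold wirtingerD
  rw [e1, e2, zpow_sub_one₀ hlam]
  have hui : lam⁻¹ = (u.re : ℂ) + u.im * Complex.I := (Complex.re_add_im u).symm
  rw [hui]
  push_cast
  ring_nf
  simp only [Complex.I_sq]
  try ring

lemma wirtingerDBar_homog (hfd : ∀ y : Fin (n+1) → ℂ, y ≠ 0 → DifferentiableAt ℝ f y)
    (hhom : BiHomogOn f p q) : BiHomogOn (wirtingerDBar j f) p (q - 1) := by
  intro lam hlam z hz
  set u := lam⁻¹ with hu
  set X := fderiv ℝ f z (Pi.single j 1) with hX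
  set Y := fderiv ℝ f z (Pi.single j Complex.I) with hY
  set c := lam ^ p * ((starRingEnd ℂ) lam) ^ q with hc
  have e1 : fderiv ℝ f (lam • z) (Pi.single j 1)
      = c * ((u.re : ℂ) * X + (u.im : ℂ) * Y) := by
    rw [fderiv_homog hfd hhom hlam hz, smul_single, mul_one,
      clm_single (fderiv ℝ f z) j u]
  have e2 : fderiv ℝ f (lam • z) (Pi.single j Complex.I)
      = c * ((-u.im : ℝ) * X + (u.re : ℂ) * Y) := by
    rw [fderiv_homog hfd hhom hlam hz, smul_single,
      clm_single (fderiv ℝ f z) j (u * Complex.I)]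
    rw [Complex.mul_I_re, Complex.mul_I_im]
    (try push_cast); (try ring)
  unfold wirtingerDBar
  rw [e1, e2, zpow_sub_one₀ (by simpa using hlam : (starRingEnd ℂ) lam ≠ 0)]
  have hconju : ((starRingEnd ℂ) lam)⁻¹ = (u.re : ℂ) - u.im * Complex.I := by
    rw [← map_inv₀, ← hu, conj_eq_re_sub_im]
  rw [hconju]
  push_cast
  ring_nf
  simp only [Complex.I_sq]
  try ring

end H

section I
variable {n : ℕ} {f g : (Fin (n + 1) → ℂ) → ℂ} {p q : ℤ} {z : Fin (n+1) → ℂ}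

lemma contDiffOn_ambientLap (hf : ContDiffOn ℝ (⊤ : ℕ∞) f {z : Fin (n + 1) → ℂ | z ≠ 0}) :
    ContDiffOn ℝ (⊤ : ℕ∞) (ambientLap n f) {z : Fin (n + 1) → ℂ | z ≠ 0} := by
  unfold ambientLap
  apply ContDiffOn.sum
  intro j _
  exact contDiffOn_const.mul (ContDiffOn.wirtingerD isOpenS (ContDiffOn.wirtingerDBar isOpenS hf))

lemma ambientLap_homog (hf : ContDiffOn ℝ (⊤ : ℕ∞) f {z : Fin (n + 1) → ℂ | z ≠ 0})
    (hhom : BiHomogOn f p q) : BiHomogOn (ambientLap n f) (p - 1) (q - 1) := by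
  intro lam hlam z hz
  have hfd : ∀ y : Fin (n+1) → ℂ, y ≠ 0 → DifferentiableAt ℝ f y :=
    fun y hy => diffAt_of_contDiffOnS hf hy
  have hbar_diff : ∀ j : Fin (n+1), ∀ y : Fin (n+1) → ℂ, y ≠ 0 →
      DifferentiableAt ℝ (wirtingerDBar j f) y :=
    fun j y hy => diffAt_of_contDiffOnS (ContDiffOn.wirtingerDBar isOpenS hf) hy
  unfold ambientLap
  rw [Finset.mul_sum]
  apply Finset.sum_congr rfl
  intro j _
  rw [wirtingerD_homog (hbar_diff j) (wirtingerDBar_homog hfd hhom) lam hlam z hz]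
  ring

lemma ambientLap_add (hf : ContDiffOn ℝ (⊤ : ℕ∞) f {z : Fin (n + 1) → ℂ | z ≠ 0})
    (hg : ContDiffOn ℝ (⊤ : ℕ∞) g {z : Fin (n + 1) → ℂ | z ≠ 0}) (hz : z ≠ 0) :
    ambientLap n (fun y => f y + g y) z = ambientLap n f z + ambientLap n g z := by
  unfold ambientLap
  rw [← Finset.sum_add_distrib]
  apply Finset.sum_congr rfl
  intro j _
  have heq : wirtingerDBar j (fun y => f y + g y) =ᶠ[nhds z]
      fun y => wirtingerDBar j f y + wirtingerDBar j g y := by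
    filter_upwards [isOpenS.mem_nhds hz] with y hy
    exact wirtingerDBar_add (diffAt_of_contDiffOnS hf hy) (diffAt_of_contDiffOnS hg hy)
  rw [wirtingerD_congr heq,
    wirtingerD_add (diffAt_of_contDiffOnS (ContDiffOn.wirtingerDBar isOpenS hf) hz)
      (diffAt_of_contDiffOnS (ContDiffOn.wirtingerDBar isOpenS hg) hz)]
  ring

lemma ambientLap_const_mul (c : ℂ) (hf : ContDiffOn ℝ (⊤ : ℕ∞) f {z : Fin (n + 1) → ℂ | z ≠ 0})
    (hz : z ≠ 0) :
    ambientLap n (fun y => c * f y) z = c * ambientLap n f z := by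
  unfold ambientLap
  rw [Finset.mul_sum]
  apply Finset.sum_congr rfl
  intro j _
  have heq : wirtingerDBar j (fun y => c * f y) =ᶠ[nhds z]
      fun y => c * wirtingerDBar j f y := by
    filter_upwards [isOpenS.mem_nhds hz] with y hy
    exact wirtingerDBar_const_mul c (diffAt_of_contDiffOnS hf hy)
  rw [wirtingerD_congr heq,
    wirtingerD_const_mul c (diffAt_of_contDiffOnS (ContDiffOn.wirtingerDBar isOpenS hf) hz)]
  ring

lemma biHomogOn_const_mul (c : ℂ) (hhom : BiHomogOn f p q) :
    BiHomogOn (fun y => c * f y) p q := by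
  intro lam hlam z hz
  show c * f (lam • z) = _
  rw [hhom lam hlam z hz]; ring

lemma lap_pow_mul (M : ℕ) (hg : ContDiffOn ℝ (⊤ : ℕ∞) g {z : Fin (n + 1) → ℂ | z ≠ 0})
    (hz : z ≠ 0) :
    ambientLap n (fun y => lorentzForm n y ^ (M+2) * g y) z
      = lorentzForm n z ^ (M+1) * (((M+2:ℕ):ℂ) * fderiv ℝ g z z
          + ((M+2:ℕ):ℂ) * (((M+2:ℕ):ℂ) + (n:ℂ)) * g z)
        + lorentzForm n z ^ (M+2) * ambientLap n g z := by
  have hgd : ∀ y : Fin (n+1) → ℂ, y ≠ 0 → DifferentiableAt ℝ g y :=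
    fun y hy => diffAt_of_contDiffOnS hg hy
  have hgbar : ∀ j : Fin (n+1), ∀ y : Fin (n+1) → ℂ, y ≠ 0 →
      DifferentiableAt ℝ (wirtingerDBar j g) y :=
    fun j y hy => diffAt_of_contDiffOnS (ContDiffOn.wirtingerDBar isOpenS hg) hy
  have hterm : ∀ j : Fin (n+1),
      lorentzSign j * wirtingerD j (wirtingerDBar j (fun y => lorentzForm n y ^ (M+2) * g y)) z
        = (((M+2:ℕ):ℂ) * lorentzForm n z ^ (M+1))
            * (z j * wirtingerD j g z + (starRingEnd ℂ) (z j) * wirtingerDBar j g z)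
          + (((M+2:ℕ):ℂ) * lorentzForm n z ^ (M+1) * g z) * 1
          + (((M+2:ℕ):ℂ) * ((M+1:ℕ):ℂ) * lorentzForm n z ^ M * g z)
            * (lorentzSign j * (z j * (starRingEnd ℂ) (z j)))
          + (lorentzForm n z ^ (M+2))
            * (lorentzSign j * wirtingerD j (wirtingerDBar j g) z) := by
    intro j
    have heq : wirtingerDBar j (fun y => lorentzForm n y ^ (M+2) * g y) =ᶠ[nhds z]
        fun y => (((M+2:ℕ):ℂ) * lorentzSign j) * (lorentzForm n y ^ (M+1) * (y j * g y))
          + lorentzForm n y ^ (M+2) * wirtingerDBar j g y := by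
      filter_upwards [isOpenS.mem_nhds hz] with y hy
      rw [wirtingerDBar_mul (differentiableAt_lorentzPow (M+2)) (hgd y hy),
        wirtingerDBar_lorentzPow (M+1)]
      push_cast; ring
    rw [wirtingerD_congr heq]
    have d1 : DifferentiableAt ℝ
        (fun y : Fin (n+1) → ℂ => lorentzForm n y ^ (M+1) * (y j * g y)) z :=
      (differentiableAt_lorentzPow (M+1)).mul (differentiableAt_coord.mul (hgd z hz))
    have d2 : DifferentiableAt ℝ
        (fun y : Fin (n+1) → ℂ =>
          (((M+2:ℕ):ℂ) * lorentzSign j) * (lorentzForm n y ^ (M+1) * (y j * g y))) z :=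
      (differentiableAt_const _).mul d1
    have d3 : DifferentiableAt ℝ
        (fun y : Fin (n+1) → ℂ => lorentzForm n y ^ (M+2) * wirtingerDBar j g y) z :=
      (differentiableAt_lorentzPow (M+2)).mul (hgbar j z hz)
    rw [wirtingerD_add d2 d3,
      wirtingerD_const_mul _ d1,
      wirtingerD_mul (differentiableAt_lorentzPow (M+1)) (differentiableAt_coord.fun_mul (hgd z hz)),
      wirtingerD_mul differentiableAt_coord (hgd z hz),
      wirtingerD_mul (differentiableAt_lorentzPow (M+2)) (hgbar j z hz),
      wirtingerD_lorentzPow M, wirtingerD_lorentzPow (M+1), wirtingerD_coord]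
    simp only [if_pos rfl]
    unfold lorentzSign
    split_ifs <;> (push_cast; ring)
  unfold ambientLap
  rw [Finset.sum_congr rfl (fun j _ => hterm j)]
  rw [Finset.sum_add_distrib, Finset.sum_add_distrib, Finset.sum_add_distrib,
    ← Finset.mul_sum, ← Finset.mul_sum, ← Finset.mul_sum, ← Finset.mul_sum]
  rw [euler_sum (hgd z hz)]
  have hsum1 : (∑ _j : Fin (n+1), (1:ℂ)) = ((n:ℂ) + 1) := by
    simp [Finset.card_univ]
  have hsum2 : (∑ j : Fin (n+1), lorentzSign j * (z j * (starRingEnd ℂ) (z j)))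
      = lorentzForm n z := by
    rw [lorentzForm_eq]
  have hsum3 : (∑ j : Fin (n+1), lorentzSign j * wirtingerD j (wirtingerDBar j g) z)
      = ambientLap n g z := rfl
  rw [hsum1, hsum2, hsum3]
  have hp1 : lorentzForm n z ^ (M+1) = lorentzForm n z ^ M * lorentzForm n z := pow_succ _ _
  have hp2 : lorentzForm n z ^ (M+2) = lorentzForm n z ^ M * lorentzForm n z * lorentzForm n z := by
    rw [pow_succ, pow_succ]
  rw [hp1, hp2]
  push_cast; ring

end I


section J
variable {n : ℕ} {h h₁ : (Fin (n + 1) → ℂ) → ℂ}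

lemma h1_homog_nonnull (hhhom : BiHomogeneous h (-(n : ℤ)) (-(n : ℤ)))
    (heqh : ∀ z : Fin (n + 1) → ℂ, z ≠ 0 → h z = lorentzForm n z * h₁ z)
    {lam : ℂ} {z : Fin (n+1) → ℂ} (hlam : lam ≠ 0) (hz : z ≠ 0)
    (hL : lorentzForm n z ≠ 0) :
    h₁ (lam • z) = lam ^ (-(n:ℤ)-1) * ((starRingEnd ℂ) lam) ^ (-(n:ℤ)-1) * h₁ z := by
  have hconj : (starRingEnd ℂ) lam ≠ 0 := by simpa using hlam
  have hsz : lam • z ≠ 0 := smul_ne_zero hlam hz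
  have E := hhhom lam hlam z
  rw [heqh _ hsz, heqh _ hz, lorentzForm_smul] at E
  have hfac : lam * (starRingEnd ℂ) lam * lorentzForm n z ≠ 0 :=
    mul_ne_zero (mul_ne_zero hlam hconj) hL
  apply mul_left_cancel₀ hfac
  rw [show lam * (starRingEnd ℂ) lam * lorentzForm n z * h₁ (lam • z)
      = lam ^ (-(n:ℤ)) * ((starRingEnd ℂ) lam) ^ (-(n:ℤ)) * (lorentzForm n z * h₁ z) from E]
  have e1 : (-(n:ℤ) - 1) + 1 = -(n:ℤ) := by ring
  have hlz : lam ^ (-(n:ℤ)) = lam ^ (-(n:ℤ)-1) * lam := by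
    rw [← zpow_add_one₀ hlam, e1]
  have hcz : ((starRingEnd ℂ) lam) ^ (-(n:ℤ)) = ((starRingEnd ℂ) lam) ^ (-(n:ℤ)-1)
      * (starRingEnd ℂ) lam := by
    rw [← zpow_add_one₀ hconj, e1]
  rw [hlz, hcz]; ring

lemma h1_biHomogOn (hhhom : BiHomogeneous h (-(n : ℤ)) (-(n : ℤ)))
    (hh1sm : ContDiffOn ℝ (⊤ : ℕ∞) h₁ {z : Fin (n + 1) → ℂ | z ≠ 0})
    (heqh : ∀ z : Fin (n + 1) → ℂ, z ≠ 0 → h z = lorentzForm n z * h₁ z) :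
    BiHomogOn h₁ (-(n:ℤ)-1) (-(n:ℤ)-1) := by
  intro lam hlam z hz
  by_cases hL : lorentzForm n z ≠ 0
  · exact h1_homog_nonnull hhhom heqh hlam hz hL
  push_neg at hL
  -- density argument along z + t • e₀
  set ζ : ℝ → (Fin (n+1) → ℂ) := fun t => z + t • (Pi.single (0 : Fin (n+1)) (1:ℂ) : Fin (n+1) → ℂ) with hζ
  have hζcont : Continuous ζ := by
    apply continuous_const.add
    exact continuous_id.smul continuous_const
  have hζ0 : ζ 0 = z := by simp [hζ]
  have htend : Filter.Tendsto ζ (nhdsWithin 0 (Set.Ioi 0)) (nhds z) := by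
    have := (hζcont.tendsto 0).mono_left (nhdsWithin_le_nhds (s := Set.Ioi (0:ℝ)))
    rwa [hζ0] at this
  have hζj : ∀ (t : ℝ) (j : Fin (n+1)), ζ t j = if j = 0 then z 0 + (t:ℂ) else z j := by
    intro t j
    by_cases hj : j = 0 <;>
      simp [hζ, hj, Pi.single_apply, Complex.real_smul]
  have hLt : ∀ t : ℝ, lorentzForm n (ζ t) = ((t * (t + 2 * (z 0).re) : ℝ) : ℂ) := by
    intro t
    unfold lorentzForm
    have hterm : ∀ j : Fin (n+1),
        lorentzSign j * ((Complex.normSq (ζ t j) : ℝ) : ℂ)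
          = lorentzSign j * ((Complex.normSq (z j) : ℝ) : ℂ)
            + (if j = 0 then ((t * (t + 2 * (z 0).re) : ℝ) : ℂ) else 0) := by
      intro j
      by_cases hj : j = 0
      · subst hj
        rw [hζj]
        simp only [eq_self_iff_true, if_true, reduceIte]
        have hns : Complex.normSq (z 0 + (t:ℂ))
            = Complex.normSq (z 0) + t * (t + 2 * (z 0).re) := by
          simp [Complex.normSq_apply]
          ring
        rw [hns]
        unfold lorentzSign
        simp only [eq_self_iff_true, if_true, reduceIte]
        push_cast
        ring
      · rw [hζj]
        simp [hj]
    rw [Finset.sum_congr rfl (fun j _ => hterm j), Finset.sum_add_distrib]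
    have h2 : (∑ j : Fin (n+1), if j = 0 then ((t * (t + 2 * (z 0).re) : ℝ) : ℂ) else 0)
        = ((t * (t + 2 * (z 0).re) : ℝ) : ℂ) := by
      simp
    rw [h2]
    have h3 : (∑ j : Fin (n+1), lorentzSign j * ((Complex.normSq (z j) : ℝ) : ℂ))
        = lorentzForm n z := rfl
    rw [h3, hL, zero_add]
  set ε : ℝ := if (z 0).re < 0 then -2 * (z 0).re else 1 with hε
  have hεpos : 0 < ε := by
    rw [hε]; split_ifs with hc
    · linarith
    · norm_num
  have hIoo : Set.Ioo (0:ℝ) ε ∈ nhdsWithin 0 (Set.Ioi 0) :=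
    Ioo_mem_nhdsGT_of_mem ⟨le_refl 0, hεpos⟩
  have hevL : ∀ᶠ t in nhdsWithin 0 (Set.Ioi 0), lorentzForm n (ζ t) ≠ 0 := by
    filter_upwards [hIoo] with t ht
    rw [hLt t]
    rw [Complex.ofReal_ne_zero]
    apply mul_ne_zero (ne_of_gt ht.1)
    rw [hε] at ht
    split_ifs at ht with hc
    · have := ht.2; intro hcon; linarith
    · push_neg at hc; intro hcon; linarith [ht.1]
  have hev_ne : ∀ᶠ t in nhdsWithin 0 (Set.Ioi 0), ζ t ≠ 0 := by
    have hmem : ∀ᶠ y in nhds z, y ≠ 0 := isOpenS.mem_nhds hz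
    exact htend.eventually hmem
  have hcont1 : ContinuousAt h₁ z :=
    (hh1sm.continuousOn.continuousAt (isOpenS.mem_nhds hz))
  have hcont2 : ContinuousAt h₁ (lam • z) :=
    (hh1sm.continuousOn.continuousAt (isOpenS.mem_nhds (smul_ne_zero hlam hz)))
  have htend2 : Filter.Tendsto (fun t => lam • ζ t) (nhdsWithin 0 (Set.Ioi 0))
      (nhds (lam • z)) := by
    have hc : Continuous (fun t => lam • ζ t) := hζcont.const_smul lam
    have := (hc.tendsto 0).mono_left (nhdsWithin_le_nhds (s := Set.Ioi (0:ℝ)))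
    rwa [hζ0] at this
  have T1 : Filter.Tendsto (fun t => h₁ (lam • ζ t)) (nhdsWithin 0 (Set.Ioi 0))
      (nhds (h₁ (lam • z))) := hcont2.tendsto.comp htend2
  have T2 : Filter.Tendsto
      (fun t => lam ^ (-(n:ℤ)-1) * ((starRingEnd ℂ) lam) ^ (-(n:ℤ)-1) * h₁ (ζ t))
      (nhdsWithin 0 (Set.Ioi 0))
      (nhds (lam ^ (-(n:ℤ)-1) * ((starRingEnd ℂ) lam) ^ (-(n:ℤ)-1) * h₁ z)) :=
    tendsto_const_nhds.mul (hcont1.tendsto.comp htend)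
  have hev_eq : (fun t => h₁ (lam • ζ t)) =ᶠ[nhdsWithin 0 (Set.Ioi 0)]
      (fun t => lam ^ (-(n:ℤ)-1) * ((starRingEnd ℂ) lam) ^ (-(n:ℤ)-1) * h₁ (ζ t)) := by
    filter_upwards [hev_ne, hevL] with t h1 h2
    exact h1_homog_nonnull hhhom heqh hlam h1 h2
  exact tendsto_nhds_unique T1 (T2.congr' hev_eq.symm)

end J

/-- if the obstruction vanishes, the formal harmonic extension continues to
all orders.  Suppose `f̃` is smooth on `ℂ^{n+1}∖{0}`, homogeneous of degree `(0,0)`, with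
`Δf̃ = L^{n−1} h` for `h` smooth homogeneous of degree `(−n,−n)`, and `h = O(L)`.
Then for every `k > n` there is `f̃ₖ`, smooth on `ℂ^{n+1}∖{0}`, with
`f̃ₖ − f̃ = O(L^n)` and `Δf̃ₖ = O(L^{k−1})`. -/
theorem harmonic_extension_continues (n : ℕ) (hn : 0 < n)
    (ftil h : (Fin (n + 1) → ℂ) → ℂ)
    (hfsm : ContDiffOn ℝ (⊤ : ℕ∞) ftil {z : Fin (n + 1) → ℂ | z ≠ 0})
    (hhsm : ContDiffOn ℝ (⊤ : ℕ∞) h {z : Fin (n + 1) → ℂ | z ≠ 0})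
    (hfhom : BiHomogeneous ftil 0 0)
    (hhhom : BiHomogeneous h (-(n : ℤ)) (-(n : ℤ)))
    (heq : ∀ z : Fin (n + 1) → ℂ, z ≠ 0 →
      ambientLap n ftil z = lorentzForm n z ^ (n - 1) * h z)
    (hobs : ∃ h₁ : (Fin (n + 1) → ℂ) → ℂ,
      ContDiffOn ℝ (⊤ : ℕ∞) h₁ {z : Fin (n + 1) → ℂ | z ≠ 0} ∧
      ∀ z : Fin (n + 1) → ℂ, z ≠ 0 → h z = lorentzForm n z * h₁ z) :
    ∀ k : ℕ, n < k →
      ∃ fk : (Fin (n + 1) → ℂ) → ℂ,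
        ContDiffOn ℝ (⊤ : ℕ∞) fk {z : Fin (n + 1) → ℂ | z ≠ 0} ∧
        (∃ r : (Fin (n + 1) → ℂ) → ℂ,
          ContDiffOn ℝ (⊤ : ℕ∞) r {z : Fin (n + 1) → ℂ | z ≠ 0} ∧
          ∀ z : Fin (n + 1) → ℂ, z ≠ 0 →
            fk z - ftil z = lorentzForm n z ^ n * r z) ∧
        (∃ s : (Fin (n + 1) → ℂ) → ℂ,
          ContDiffOn ℝ (⊤ : ℕ∞) s {z : Fin (n + 1) → ℂ | z ≠ 0} ∧
          ∀ z : Fin (n + 1) → ℂ, z ≠ 0 →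
            ambientLap n fk z = lorentzForm n z ^ (k - 1) * s z) := by
  obtain ⟨h₁, hh1sm, heqh⟩ := hobs
  have hhomOn : BiHomogOn h₁ (-(n:ℤ)-1) (-(n:ℤ)-1) := h1_biHomogOn hhhom hh1sm heqh
  have main : ∀ i : ℕ, ∃ fk sk : (Fin (n+1) → ℂ) → ℂ,
      ContDiffOn ℝ (⊤ : ℕ∞) fk {z : Fin (n + 1) → ℂ | z ≠ 0} ∧
      ContDiffOn ℝ (⊤ : ℕ∞) sk {z : Fin (n + 1) → ℂ | z ≠ 0} ∧
      (∃ r : (Fin (n+1) → ℂ) → ℂ, ContDiffOn ℝ (⊤ : ℕ∞) r {z : Fin (n + 1) → ℂ | z ≠ 0} ∧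
        ∀ z : Fin (n + 1) → ℂ, z ≠ 0 → fk z - ftil z = lorentzForm n z ^ n * r z) ∧
      (∀ z : Fin (n + 1) → ℂ, z ≠ 0 →
        ambientLap n fk z = lorentzForm n z ^ (n + i) * sk z) ∧
      BiHomogOn sk (-((n:ℤ) + 1 + i)) (-((n:ℤ) + 1 + i)) := by
    intro i
    induction i with
    | zero =>
      refine ⟨ftil, h₁, hfsm, hh1sm, ⟨0, contDiffOn_const, fun z hz => by simp⟩,
        fun z hz => ?_, ?_⟩
      · rw [heq z hz, heqh z hz]
        have hpow : lorentzForm n z ^ (n - 1) * lorentzForm n z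
            = lorentzForm n z ^ (n + 0) := by
          rw [← pow_succ]
          congr 1
          omega
        calc lorentzForm n z ^ (n-1) * (lorentzForm n z * h₁ z)
            = lorentzForm n z ^ (n-1) * lorentzForm n z * h₁ z := by ring
          _ = lorentzForm n z ^ (n + 0) * h₁ z := by rw [hpow]
      · have : -((n:ℤ) + 1 + (0:ℕ)) = -(n:ℤ) - 1 := by push_cast; ring
        rw [this]
        exact hhomOn
    | succ i ih =>
      obtain ⟨fk, sk, hfk, hsk, ⟨r, hr, hrq⟩, hlap, hhom⟩ := ih
      set k := n + 1 + i with hk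
      have hkcast : ((k:ℕ):ℤ) = (n:ℤ) + 1 + i := by rw [hk]; push_cast; ring
      set d : ℂ := (((k:ℕ):ℂ) * (((k:ℕ):ℂ) - (n:ℂ)))⁻¹ with hd
      have hkn0 : (((k:ℕ):ℂ) * (((k:ℕ):ℂ) - (n:ℂ))) ≠ 0 := by
        apply mul_ne_zero
        · exact (Nat.cast_ne_zero (R := ℂ)).mpr (show k ≠ 0 by rw [hk]; omega)
        · have : ((k:ℕ):ℂ) - (n:ℂ) = ((1 + i : ℕ) : ℂ) := by
            rw [hk]; push_cast; ring
          rw [this]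
          exact (Nat.cast_ne_zero (R := ℂ)).mpr (by omega)
      set g : (Fin (n+1) → ℂ) → ℂ := fun y => d * sk y with hg
      have hgsm : ContDiffOn ℝ (⊤ : ℕ∞) g {z : Fin (n + 1) → ℂ | z ≠ 0} :=
        contDiffOn_const.mul hsk
      have hghom : BiHomogOn g (-(k:ℤ)) (-(k:ℤ)) := by
        have := biHomogOn_const_mul (f := sk) d hhom
        rw [show -((n:ℤ) + 1 + i) = -(k:ℤ) by rw [hkcast]] at this
        exact this
      have hLk : ContDiffOn ℝ (⊤ : ℕ∞) (fun y => lorentzForm n y ^ k * g y)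
          {z : Fin (n + 1) → ℂ | z ≠ 0} :=
        ((contDiff_lorentzForm.pow k).contDiffOn).mul hgsm
      refine ⟨fun y => fk y + lorentzForm n y ^ k * g y, ambientLap n g,
        hfk.add hLk, contDiffOn_ambientLap hgsm,
        ⟨fun y => r y + lorentzForm n y ^ (1+i) * g y,
          hr.add (((contDiff_lorentzForm.pow (1+i)).contDiffOn).mul hgsm),
          fun z hz => ?_⟩,
        fun z hz => ?_, ?_⟩
      · rw [show fk z + lorentzForm n z ^ k * g z - ftil z
            = (fk z - ftil z) + lorentzForm n z ^ k * g z by ring, hrq z hz]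
        rw [show k = n + (1+i) by omega, pow_add]
        ring
      · -- Laplacian computation
        rw [ambientLap_add hfk hLk hz, hlap z hz]
        set M := n - 1 + i with hM
        have eM2 : M + 2 = k := by rw [hM, hk]; omega
        have eM1 : M + 1 = n + i := by rw [hM]; omega
        have hplm := lap_pow_mul (n := n) (g := g) M hgsm hz
        rw [eM2, eM1] at hplm
        rw [hplm]
        have heuler : fderiv ℝ g z z = ((-(k:ℤ) + -(k:ℤ) : ℤ) : ℂ) * g z :=
          euler_radial (diffAt_of_contDiffOnS hgsm hz) hghom hz
        rw [heuler]
        have hgval : ∀ y, g y = d * sk y := fun y => rfl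
        rw [hgval z]
        have hdval : ((k:ℕ):ℂ) * ((-(k:ℤ) + -(k:ℤ) : ℤ) : ℂ) * d
            + ((k:ℕ):ℂ) * (((k:ℕ):ℂ) + (n:ℂ)) * d = -1 := by
          rw [hd]
          push_cast
          linear_combination (-1 : ℂ) * mul_inv_cancel₀ hkn0
        have hfin : lorentzForm n z ^ (n+i) * sk z
            + lorentzForm n z ^ (n+i) * (((k:ℕ):ℂ) * (((-(k:ℤ) + -(k:ℤ) : ℤ) : ℂ) * (d * sk z))
              + ((k:ℕ):ℂ) * (((k:ℕ):ℂ) + (n:ℂ)) * (d * sk z))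
            + lorentzForm n z ^ k * ambientLap n g z
            = lorentzForm n z ^ (n + (i+1)) * ambientLap n g z := by
          have hcoef : ((k:ℕ):ℂ) * (((-(k:ℤ) + -(k:ℤ) : ℤ) : ℂ) * (d * sk z))
              + ((k:ℕ):ℂ) * (((k:ℕ):ℂ) + (n:ℂ)) * (d * sk z)
              = (((k:ℕ):ℂ) * ((-(k:ℤ) + -(k:ℤ) : ℤ) : ℂ) * d
                  + ((k:ℕ):ℂ) * (((k:ℕ):ℂ) + (n:ℂ)) * d) * sk z := by ring
          rw [hcoef, hdval, show n + (i+1) = k by omega]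
          ring
        rw [← hfin]
        ring
      · have := ambientLap_homog hgsm hghom
        rw [show -((n:ℤ) + 1 + (i+1:ℕ)) = -(k:ℤ) - 1 by rw [hkcast]; push_cast; ring]
        exact this
  intro k hk
  obtain ⟨fk, sk, h1, h2, h3, h4, _⟩ := main (k - n - 1)
  refine ⟨fk, h1, h3, sk, h2, fun z hz => ?_⟩
  rw [h4 z hz, show n + (k - n - 1) = k - 1 by omega]
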